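/- arXiv:1711.11080 — 7 statements merged into one kernel-verified Lean document; each statement's English description precedes it below -/
import Mathlib

section
/- For nonnegative integers i and n, let I(i,n) denote the number of permutations σ of {1,…,n} of length i, i.e. with exactly i inversions (pairs a < b with σ(a) > σ(b)). Then for each fixed i ≥ 1, there is a polynomial f ∈ ℚ[t] of degree i such that I(i,n) = f(n) for all sufficiently large n. -/
open Filter

/-- The number of inversions (the length) of a permutation of `Fin n`:
the number of pairs `a < b` with `σ a > σ b`. -/
def permInversions (n : ℕ) (σ : Equiv.Perm (Fin n)) : ℕ :=
  (Finset.univ.filter (fun p : Fin n × Fin n => p.1 < p.2 ∧ σ p.2 < σ p.1)).card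

/-- `I i n` is the number of permutations of `{1, …, n}` with exactly `i` inversions. -/
def numPermsWithInversions (i n : ℕ) : ℕ :=
  (Finset.univ.filter (fun σ : Equiv.Perm (Fin n) => permInversions n σ = i)).card

/-!
Recording `p = σ 0` and the relative order of the remaining values identifies permutations `σ`
of `n + 1` letters with pairs `(p, τ)`, `τ` a permutation of `n` letters, and then
`inv σ = p + inv τ`. Hence `I(i + 1, n + 1) - I(i + 1, n) = I(i, n + 1)` for `i < n`, so by
induction on `i` the forward difference of `n ↦ I(i + 1, n)` is eventually a polynomial of
degree `i`. Bernoulli polynomials provide discrete antiderivatives, and an antiderivative of a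
polynomial of degree `i` has degree `i + 1`.
-/

open Polynomial Finset Equiv
open scoped fwdDiff

namespace Polynomial

theorem degree_taylor_sub_lt {R : Type*} [CommRing R] (r : R) {f : R[X]} (hf : f ≠ 0) :
    (taylor r f - f).degree < f.degree := by
  rw [← degree_taylor f r]
  exact degree_sub_lt_left (degree_taylor f r) (mt (taylor_eq_zero r f).mp hf)
    (leadingCoeff_taylor r f)

theorem natDegree_bernoulli_le (n : ℕ) : (bernoulli n).natDegree ≤ n :=
  natDegree_le_iff_coeff_eq_zero.mpr fun i hi => by
    rw [coeff_bernoulli, if_neg (not_le.mpr hi)]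

theorem taylor_one_bernoulli_succ_sub (n : ℕ) :
    taylor 1 (bernoulli (n + 1)) - bernoulli (n + 1) = C ((n : ℚ) + 1) * X ^ n := by
  rw [taylor_apply, add_comm X, map_one, bernoulli_comp_one_add_X, add_sub_cancel_left,
    Nat.add_sub_cancel, nsmul_eq_mul]
  simp

theorem exists_natDegree_le_taylor_one_sub_eq (g : ℚ[X]) :
    ∃ G : ℚ[X], G.natDegree ≤ g.natDegree + 1 ∧ taylor 1 G - G = g := by
  refine ⟨∑ k ∈ range (g.natDegree + 1), C (g.coeff k / (k + 1)) * bernoulli (k + 1), ?_, ?_⟩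
  · refine natDegree_sum_le_of_forall_le _ _ fun k hk => natDegree_C_mul_le _ _ |>.trans ?_
    exact (natDegree_bernoulli_le _).trans (by simpa using mem_range.mp hk)
  · conv_rhs => rw [g.as_sum_range_C_mul_X_pow]
    rw [map_sum, ← sum_sub_distrib]
    refine sum_congr rfl fun k _ => ?_
    rw [taylor_mul, taylor_C, ← mul_sub, taylor_one_bernoulli_succ_sub, ← mul_assoc, ← C_mul,
      div_mul_cancel₀ _ (by positivity)]

end Polynomial

def IsEventuallyPolynomialOfDegree (a : ℕ → ℚ) (d : ℕ) : Prop :=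
  ∃ f : ℚ[X], f.degree = d ∧ a =ᶠ[atTop] fun n => f.eval (n : ℚ)

namespace IsEventuallyPolynomialOfDegree

variable {a : ℕ → ℚ} {d : ℕ}

theorem congr {b : ℕ → ℚ} (h : IsEventuallyPolynomialOfDegree b d) (hab : a =ᶠ[atTop] b) :
    IsEventuallyPolynomialOfDegree a d :=
  let ⟨f, hf, hb⟩ := h
  ⟨f, hf, hab.trans hb⟩

theorem comp_succ (h : IsEventuallyPolynomialOfDegree a d) :
    IsEventuallyPolynomialOfDegree (fun n => a (n + 1)) d := by
  obtain ⟨f, hdeg, hf⟩ := h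
  refine ⟨taylor 1 f, by rw [degree_taylor, hdeg], ?_⟩
  filter_upwards [(tendsto_add_atTop_nat 1).eventually hf] with n hn
  rw [hn, taylor_eval, Nat.cast_succ]

theorem of_fwdDiff (h : IsEventuallyPolynomialOfDegree (Δ_[1] a) d) :
    IsEventuallyPolynomialOfDegree a (d + 1) := by
  obtain ⟨g, hg, hΔ⟩ := h
  obtain ⟨G, hGdeg, hG⟩ := exists_natDegree_le_taylor_one_sub_eq g
  obtain ⟨N, hN⟩ := eventually_atTop.mp hΔ
  set f := G + C (a N - G.eval (N : ℚ))
  have hf : taylor 1 f - f = g := by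
    rw [map_add, taylor_C, add_sub_add_right_eq_sub, hG]
  have hf0 : f ≠ 0 := by
    rintro hf0
    rw [hf0, map_zero, sub_zero] at hf
    rw [← hf, degree_zero] at hg
    exact WithBot.bot_ne_coe hg
  refine ⟨f, ?_, eventually_atTop.mpr ⟨N, fun n hn => ?_⟩⟩
  · have hlt := degree_taylor_sub_lt 1 hf0
    have hle : f.natDegree ≤ d + 1 := by
      rw [natDegree_add_C, ← natDegree_eq_of_degree_eq_some hg]
      exact hGdeg
    rw [hf, hg, degree_eq_natDegree hf0] at hlt
    rw [degree_eq_natDegree hf0]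
    norm_cast at hlt ⊢
    omega
  · induction n, hn using Nat.le_induction with
    | base => simp [f]
    | succ n hn ih =>
      have hstep : f.eval ((n : ℚ) + 1) - f.eval (n : ℚ) = g.eval (n : ℚ) := by
        rw [← hf, eval_sub, taylor_eval]
      have hΔn := hN n hn
      rw [fwdDiff] at hΔn
      push_cast
      linarith

end IsEventuallyPolynomialOfDegree

def consPerm {n : ℕ} (p : Fin (n + 1)) (e : Perm (Fin n)) : Perm (Fin (n + 1)) :=
  (finSuccEquiv n).trans (e.optionCongr.trans (finSuccEquiv' p).symm)

section consPerm

variable {n : ℕ} (p : Fin (n + 1)) (e : Perm (Fin n))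

@[simp] theorem consPerm_zero : consPerm p e 0 = p := by
  simp [consPerm]

@[simp] theorem consPerm_succ (j : Fin n) : consPerm p e j.succ = p.succAbove (e j) := by
  simp [consPerm]

theorem consPerm_bijective :
    Function.Bijective fun x : Fin (n + 1) × Perm (Fin n) => consPerm x.1 x.2 := by
  refine (Fintype.bijective_iff_injective_and_card _).mpr ⟨?_, ?_⟩
  · rintro ⟨p, e⟩ ⟨q, f⟩ h
    obtain rfl : p = q := by simpa using congr($h 0)
    have : e = f := Equiv.ext fun j => Fin.succAbove_right_injective (p := p) <| by
      simpa using congr($h j.succ)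
    rw [this]
  · simp [Fintype.card_perm, Nat.factorial_succ]

theorem permInversions_eq_sum (σ : Perm (Fin n)) :
    permInversions n σ = ∑ a, ∑ b, if a < b ∧ σ b < σ a then 1 else 0 := by
  rw [permInversions, card_filter, Fintype.sum_prod_type]

theorem permInversions_consPerm :
    permInversions (n + 1) (consPerm p e) = p + permInversions n e := by
  have hfirst : (∑ b, if (0 : Fin (n + 1)) < b ∧ consPerm p e b < consPerm p e 0 then 1 else 0)
      = (p : ℕ) := by
    simp only [Fin.sum_univ_succ, lt_self_iff_false, false_and, if_false, zero_add, Fin.succ_pos,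
      true_and, consPerm_succ, consPerm_zero, Fin.succAbove_lt_iff_castSucc_lt]
    rw [Equiv.sum_comp e (fun j : Fin n => if j.castSucc < p then 1 else 0), ← card_filter]
    simp only [Fin.lt_def, Fin.val_castSucc]
    rw [Fin.card_filter_val_lt, min_eq_right (Fin.is_le p)]
  rw [permInversions_eq_sum, permInversions_eq_sum, Fin.sum_univ_succ, hfirst]
  congr 1
  refine sum_congr rfl fun a _ => ?_
  simp only [Fin.sum_univ_succ, Fin.succ_lt_succ_iff, consPerm_succ, Fin.succAbove_lt_succAbove_iff,
    Fin.not_lt_zero, false_and, if_false, zero_add]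

end consPerm

theorem numPermsWithInversions_succ_of_le {i n : ℕ} (h : i ≤ n) :
    numPermsWithInversions i (n + 1) = ∑ p ∈ range (i + 1), numPermsWithInversions (i - p) n := by
  have hcount : numPermsWithInversions i (n + 1)
      = #{x : Fin (n + 1) × Perm (Fin n) | x.1 + permInversions n x.2 = i} :=
    (card_bijective _ consPerm_bijective fun x => by simp [permInversions_consPerm]).symm
  have hfiber (p : Fin (n + 1)) :
      (∑ e : Perm (Fin n), if (p : ℕ) + permInversions n e = i then 1 else 0)
        = if (p : ℕ) ≤ i then numPermsWithInversions (i - p) n else 0 := by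
    split_ifs with hp
    · rw [numPermsWithInversions, card_filter]
      exact sum_congr rfl fun e _ => if_congr (by omega) rfl rfl
    · exact sum_eq_zero fun e _ => if_neg (by omega)
  rw [hcount, card_filter, Fintype.sum_prod_type]
  simp only [hfiber]
  rw [Fin.sum_univ_eq_sum_range (fun p => if p ≤ i then numPermsWithInversions (i - p) n else 0),
    ← sum_filter]
  congr 1
  ext p
  simp only [mem_filter, mem_range]
  omega

theorem numPermsWithInversions_succ_succ {i n : ℕ} (h : i < n) :
    numPermsWithInversions (i + 1) (n + 1)
      = numPermsWithInversions (i + 1) n + numPermsWithInversions i (n + 1) := by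
  rw [numPermsWithInversions_succ_of_le h, numPermsWithInversions_succ_of_le h.le, sum_range_succ',
    add_comm]
  simp

theorem numPermsWithInversions_zero (n : ℕ) : numPermsWithInversions 0 n = 1 := by
  induction n with
  | zero => rfl
  | succ n ih => simp [numPermsWithInversions_succ_of_le (Nat.zero_le n), ih]

theorem isEventuallyPolynomialOfDegree_numPermsWithInversions (i : ℕ) :
    IsEventuallyPolynomialOfDegree (fun n => (numPermsWithInversions i n : ℚ)) i := by
  induction i with
  | zero => exact ⟨1, degree_one, .of_forall fun n => by simp [numPermsWithInversions_zero]⟩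
  | succ i ih =>
    refine IsEventuallyPolynomialOfDegree.of_fwdDiff (ih.comp_succ.congr ?_)
    filter_upwards [eventually_gt_atTop i] with n hn
    simp [fwdDiff, numPermsWithInversions_succ_succ hn]

theorem numPermsWithInversions_eventually_polynomial_general (i : ℕ) :
    ∃ f : Polynomial ℚ, f.degree = i ∧
      ∀ᶠ n : ℕ in atTop, (numPermsWithInversions i n : ℚ) = f.eval (n : ℚ) :=
  isEventuallyPolynomialOfDegree_numPermsWithInversions i

/-- For each fixed `i ≥ 1`, there is a polynomial `f ∈ ℚ[t]` of degree `i` such that the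
number of permutations of `{1, …, n}` with exactly `i` inversions equals `f(n)` for all
sufficiently large `n`. -/
theorem numPermsWithInversions_eventually_polynomial (i : ℕ) (hi : 1 ≤ i) :
    ∃ f : Polynomial ℚ, f.degree = i ∧
      ∀ᶠ n : ℕ in atTop, (numPermsWithInversions i n : ℚ) = f.eval (n : ℚ) :=
  numPermsWithInversions_eventually_polynomial_general i
end

section
/- Let C be a category satisfying property (F), let k be a commutative ring, and let M and N be C-modules over k that are generated in finite degrees. Then the pointwise tensor product M ⊗ N, defined by (M ⊗ N)_x = M_x ⊗_k N_x, is generated in finite degrees. -/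
/-!
Choose generators `xᵢ` of `M` and `x'ⱼ` of `N`. A pure tensor `M f m ⊗ N g n` with
`f : xᵢ ⟶ y`, `g : x'ⱼ ⟶ y` comes from the morphism `(f, g) : (xᵢ, x'ⱼ) ⟶ (y, y)`, which by
property (F) factors as `(p ≫ h, q ≫ h)` through one of finitely many objects `z`. So it is the
image under `h` of `M p m ⊗ N q n ∈ (M ⊗ N) z`, and these finitely many `z` generate `M ⊗ N`,
because pure tensors of generators span a tensor product.
-/
open CategoryTheory

universe u v w

variable {k : Type u} [CommRing k]

namespace CatModule

variable {C : Type v} [Category.{w} C]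

/-- A functor `Φ : C ⥤ D` satisfies property (F) if for every `y : D` there are finitely
many objects `x₁, …, xₙ : C` and morphisms `fᵢ : y ⟶ Φ xᵢ` such that every morphism
`f : y ⟶ Φ x` factors as `f = fᵢ ≫ Φ g` for some `i` and some `g : xᵢ ⟶ x`. -/
def PropertyF {D : Type*} [Category D] (Φ : C ⥤ D) : Prop :=
  ∀ y : D, ∃ (n : ℕ) (x : Fin n → C) (t : ∀ i, y ⟶ Φ.obj (x i)),
    ∀ (z : C) (f : y ⟶ Φ.obj z), ∃ (i : Fin n) (g : x i ⟶ z), f = t i ≫ Φ.map g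

/-- A category `C` satisfies property (F) if the diagonal functor `C ⥤ C × C` does. -/
def CatPropertyF (C : Type v) [Category.{w} C] : Prop :=
  PropertyF (Functor.diag C)

/-- A `C`-module `M` (a functor `C ⥤ Mod_k`) is generated in finite degrees if there are
finitely many objects `x₁, …, xₙ` of `C` such that for every object `y` the images of the
`M (xᵢ)` under all morphisms `xᵢ ⟶ y` span `M y`; equivalently, the canonical map
`⊕ᵢ M_{xᵢ} ⊗ P_{xᵢ} ⟶ M` is surjective. -/
def GeneratedInFiniteDegrees (M : C ⥤ ModuleCat.{u} k) : Prop :=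
  ∃ (n : ℕ) (x : Fin n → C),
    ∀ y : C, Submodule.span k
      {v : M.obj y | ∃ (i : Fin n) (f : x i ⟶ y) (m : M.obj (x i)), M.map f m = v} = ⊤

/-- The pointwise tensor product of two `C`-modules over `k`:
`(M ⊗ N) x = M x ⊗[k] N x`. -/
noncomputable def tensorObj (M N : C ⥤ ModuleCat.{u} k) : C ⥤ ModuleCat.{u} k where
  obj x := ModuleCat.of k (TensorProduct k (M.obj x) (N.obj x))
  map f := ModuleCat.ofHom (TensorProduct.map (M.map f).hom (N.map f).hom)
  map_id x := by
    rw [M.map_id, N.map_id]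
    ext : 1
    simp [TensorProduct.map_id]
  map_comp f g := by
    rw [M.map_comp, N.map_comp]
    ext : 1
    simp [TensorProduct.map_comp]

end CatModule

open CatModule

theorem TensorProduct.span_image2_tmul_eq_top {R M N : Type*} [CommSemiring R] [AddCommMonoid M]
    [AddCommMonoid N] [Module R M] [Module R N] {s : Set M} {t : Set N}
    (hs : Submodule.span R s = ⊤) (ht : Submodule.span R t = ⊤) :
    Submodule.span R (Set.image2 (· ⊗ₜ[R] ·) s t) = ⊤ :=
  (Submodule.map₂_span_span R (TensorProduct.mk R M N) s t).symm.trans <| by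
    rw [hs, ht, TensorProduct.map₂_mk_top_top_eq_top]

namespace CatModule

variable {C : Type v} [Category.{w} C]

def imagesFrom {ι : Type*} (M : C ⥤ ModuleCat.{u} k) (x : ι → C) (y : C) : Set (M.obj y) :=
  {v | ∃ (i : ι) (f : x i ⟶ y) (m : M.obj (x i)), M.map f m = v}

theorem generatedInFiniteDegrees_of_finite {ι : Type*} [Finite ι] {M : C ⥤ ModuleCat.{u} k}
    (x : ι → C) (hx : ∀ y, Submodule.span k (imagesFrom M x y) = ⊤) :
    GeneratedInFiniteDegrees M := by
  obtain ⟨n, ⟨e⟩⟩ := Finite.exists_equiv_fin ι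
  refine ⟨n, x ∘ e.symm, fun y => eq_top_mono (Submodule.span_mono ?_) (hx y)⟩
  rintro _ ⟨i, f, m, rfl⟩
  obtain ⟨j, rfl⟩ := e.symm.surjective i
  exact ⟨j, f, m, rfl⟩

theorem CatPropertyF.exists_factor_pair (hC : CatPropertyF C) (a b : C) :
    ∃ (n : ℕ) (z : Fin n → C) (p : ∀ i, a ⟶ z i) (q : ∀ i, b ⟶ z i),
      ∀ (y : C) (f : a ⟶ y) (g : b ⟶ y),
        ∃ (i : Fin n) (h : z i ⟶ y), f = p i ≫ h ∧ g = q i ≫ h := by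
  obtain ⟨n, z, t, ht⟩ := hC (a, b)
  refine ⟨n, z, fun i => (t i).1, fun i => (t i).2, fun y f g => ?_⟩
  obtain ⟨i, h, hfg⟩ := ht y (f, g)
  exact ⟨i, h, congrArg Prod.fst hfg, congrArg Prod.snd hfg⟩

theorem tensorObj_map_tmul (M N : C ⥤ ModuleCat.{u} k) {x y : C} (f : x ⟶ y) (m : M.obj x)
    (n : N.obj x) : (tensorObj M N).map f (m ⊗ₜ n) = M.map f m ⊗ₜ N.map f n :=
  rfl

end CatModule

/-- Let `C` be a category satisfying property (F), let `k` be a commutative ring, and let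
`M` and `N` be `C`-modules over `k` that are generated in finite degrees.  Then the
pointwise tensor product `M ⊗ N` is generated in finite degrees. -/
theorem generatedInFiniteDegrees_tensor {C : Type v} [Category.{w} C]
    (hC : CatPropertyF C) (M N : C ⥤ ModuleCat.{u} k)
    (hM : GeneratedInFiniteDegrees M) (hN : GeneratedInFiniteDegrees N) :
    GeneratedInFiniteDegrees (tensorObj M N) := by
  obtain ⟨m, xM, hxM⟩ := hM
  obtain ⟨n, xN, hxN⟩ := hN
  choose num z p q hpq using fun ij : Fin m × Fin n => hC.exists_factor_pair (xM ij.1) (xN ij.2)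
  refine generatedInFiniteDegrees_of_finite (fun s : Σ ij, Fin (num ij) => z s.1 s.2) fun y =>
    eq_top_mono (Submodule.span_mono ?_)
      (TensorProduct.span_image2_tmul_eq_top (hxM y) (hxN y))
  rintro _ ⟨_, ⟨i, f, a, rfl⟩, _, ⟨j, g, b, rfl⟩, rfl⟩
  obtain ⟨l, h, rfl, rfl⟩ := hpq (i, j) y f g
  exact ⟨⟨(i, j), l⟩, h, M.map (p _ l) a ⊗ₜ N.map (q _ l) b, by
    rw [tensorObj_map_tmul, Functor.map_comp_apply, Functor.map_comp_apply]⟩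
end

section
/- For every d ≥ 0 there is an equivalence of categories OI(d) ≃ OI^{d+1}, given on objects by sending (S, λ) to the tuple (S_1, …, S_{d+1}), where S_i = {x ∈ S : λ_{i-1} < x < λ_i} (with the conventions λ_0 < x and x < λ_{d+1} for all x ∈ S). -/
open CategoryTheory

universe u

/-- The (skeletal model of the) category `OI` of finite totally ordered sets and
order-preserving injections: the object `n` represents `[n] = {1, …, n}`, and a
morphism `n ⟶ m` is an order-preserving injection `Fin n ↪o Fin m`. -/
def OI : Type := ℕ

namespace OI

/-- Build an object of `OI` from a natural number. -/
def mk (n : ℕ) : OI := n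

/-- The underlying natural number of an object of `OI`. -/
def len (n : OI) : ℕ := n

instance : Category OI where
  Hom n m := Fin n.len ↪o Fin m.len
  id _ := RelEmbedding.refl _
  comp f g := f.trans g
  id_comp _ := rfl
  comp_id _ := rfl
  assoc _ _ _ := rfl

/-- The order embedding underlying a morphism of `OI`. -/
def emb {n m : OI} (f : n ⟶ m) : Fin n.len ↪o Fin m.len := f

@[ext]
theorem hom_ext {n m : OI} (f g : n ⟶ m) (h : ∀ i, emb f i = emb g i) : f = g :=
  RelEmbedding.ext h

end OI

/-- A module over a category `C` (a functor `C ⥤ Mod_k`) is finitely generated if there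
are finitely many elements `mᵢ ∈ M xᵢ` whose images under all morphisms span every `M y`;
equivalently, `M` is a quotient of a finite direct sum of principal projectives. -/
def CatModule.FG {C : Type*} [Category C] {k : Type u} [CommRing k]
    (M : C ⥤ ModuleCat.{u} k) : Prop :=
  ∃ (r : ℕ) (x : Fin r → C) (m : ∀ i, M.obj (x i)),
    ∀ y : C, Submodule.span k
      {v : M.obj y | ∃ (i : Fin r) (f : x i ⟶ y), M.map f (m i) = v} = ⊤

/-- The category `OI(d)`: objects are pairs `(S, λ)` of a finite totally ordered set
(modelled skeletally by `Fin n`) with an increasing `d`-tuple `λ` in it; morphisms are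
order-preserving injections carrying the marked tuple of the source to that of the
target. -/
structure OId (d : ℕ) : Type where
  len : ℕ
  lam : Fin d ↪o Fin len

namespace OId

variable {d : ℕ}

instance : Category (OId d) where
  Hom X Y := { f : Fin X.len ↪o Fin Y.len // ∀ i, f (X.lam i) = Y.lam i }
  id X := ⟨RelEmbedding.refl _, fun _ => rfl⟩
  comp f g := ⟨f.1.trans g.1, fun i => by
    simp only [RelEmbedding.trans_apply, f.2, g.2]⟩
  id_comp _ := rfl
  comp_id _ := rfl
  assoc _ _ _ := rfl

/-- The order embedding underlying a morphism of `OI(d)`. -/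
def emb {X Y : OId d} (f : X ⟶ Y) : Fin X.len ↪o Fin Y.len :=
  (f : { f : Fin X.len ↪o Fin Y.len // ∀ i, f (X.lam i) = Y.lam i }).1

@[ext]
theorem hom_ext {X Y : OId d} (f g : X ⟶ Y) (h : ∀ i, emb f i = emb g i) : f = g :=
  Subtype.ext (RelEmbedding.ext h)

/-- The forgetful functor `Φ : OI(d) ⥤ OI`, `(S, λ) ↦ S`. -/
def forget (d : ℕ) : OId d ⥤ OI where
  obj X := OI.mk X.len
  map f := OId.emb f
  map_id _ := rfl
  map_comp _ _ := rfl

end OId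

/-!
A finite linear order with `d` marked points is the ordered sum of its `d + 1` gaps, separated
by the marks, and an order embedding preserving the marks is the same thing as a family of order
embeddings between corresponding gaps. Hence sending `(S, λ)` to its tuple of gap sizes is fully
faithful; it is essentially surjective because gluing `Fin n₀, …, Fin n_d` along `d` new points
realises any tuple of gap sizes.
-/

section Gaps

variable {d : ℕ} {β β' : Type*} [LinearOrder β] [LinearOrder β']

/-- The gaps are indexed from `0`: the `i`-th one lies strictly between `lam (i - 1)` and
`lam i`, read as `-∞` for `i = 0` and `+∞` for `i = d`. -/
abbrev InGap (lam : Fin d → β) (i : Fin (d + 1)) (x : β) : Prop :=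
  (∀ j : Fin d, (j : ℕ) < (i : ℕ) → lam j < x) ∧ (∀ j : Fin d, (i : ℕ) ≤ (j : ℕ) → x < lam j)

namespace InGap

variable {lam : Fin d → β} {i i' : Fin (d + 1)} {x y : β}

theorem lt_of_lt_index (hx : InGap lam i x) (hy : InGap lam i' y) (h : i < i') : x < y :=
  have hi : (i : ℕ) < d := lt_of_lt_of_le h (Nat.lt_succ_iff.mp i'.2)
  (hx.2 ⟨i, hi⟩ le_rfl).trans (hy.1 ⟨i, hi⟩ h)

theorem unique (hx : InGap lam i x) (hx' : InGap lam i' x) : i = i' := by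
  by_contra hne
  rcases lt_or_gt_of_ne hne with h | h
  · exact (hx.lt_of_lt_index hx' h).false
  · exact (hx'.lt_of_lt_index hx h).false

theorem ne_apply (hx : InGap lam i x) (j : Fin d) : x ≠ lam j := by
  rcases lt_or_ge (j : ℕ) i with h | h
  · exact (hx.1 j h).ne'
  · exact (hx.2 j h).ne

theorem map {lam' : Fin d → β'} (e : β ↪o β') (he : ∀ j, e (lam j) = lam' j)
    (hx : InGap lam i x) : InGap lam' i (e x) :=
  ⟨fun j hj => he j ▸ e.lt_iff_lt.2 (hx.1 j hj), fun j hj => he j ▸ e.lt_iff_lt.2 (hx.2 j hj)⟩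

theorem orderIso_iff (e : β ≃o β') : InGap (fun j => e (lam j)) i (e x) ↔ InGap lam i x := by
  simp only [InGap, e.lt_iff_lt]

end InGap

theorem exists_eq_or_inGap {lam : Fin d → β} (hlam : Monotone lam) (x : β) :
    (∃ j, lam j = x) ∨ ∃ i, InGap lam i x := by
  classical
  by_cases hx : ∃ j, lam j = x
  · exact .inl hx
  push Not at hx
  have hP : ∃ k, ∀ j : Fin d, k ≤ (j : ℕ) → x < lam j := ⟨d, fun j hj => absurd j.2 hj.not_gt⟩
  refine .inr ⟨⟨Nat.find hP, Nat.lt_succ_of_le (Nat.find_le fun j hj => absurd j.2 hj.not_gt)⟩,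
    fun j hj => ?_, Nat.find_spec hP⟩
  obtain ⟨j', hjj', hj'⟩ : ∃ j' : Fin d, (j : ℕ) ≤ j' ∧ lam j' ≤ x := by
    simpa using Nat.find_min hP hj
  exact ((hlam (Fin.le_def.2 hjj')).trans hj').lt_of_ne (hx j)

end Gaps

/-- The summand `{j // j.castSucc = i}` is the single new point `mark i` following `α i` when
`i < d`, and is empty when `i = d`. -/
abbrev Glue (d : ℕ) (α : Fin (d + 1) → Type*) : Type _ :=
  Σₗ i, α i ⊕ₗ {j : Fin d // j.castSucc = i}

namespace Glue

variable {d : ℕ} {α α' : Fin (d + 1) → Type*} [∀ i, LinearOrder (α i)]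
  [∀ i, LinearOrder (α' i)] {β : Type*} [LinearOrder β]

def inl (i : Fin (d + 1)) : α i ↪o Glue d α :=
  OrderEmbedding.ofStrictMono (fun a => toLex ⟨i, toLex (Sum.inl a)⟩)
    fun _ _ h => Sigma.Lex.lt_def.2 (.inr ⟨rfl, Sum.Lex.inl_lt_inl_iff.2 h⟩)

def mark : Fin d ↪o Glue d α :=
  OrderEmbedding.ofStrictMono (fun j => toLex ⟨j.castSucc, toLex (Sum.inr ⟨j, rfl⟩)⟩)
    fun _ _ h => Sigma.Lex.lt_def.2 (.inl (Fin.castSucc_lt_castSucc_iff.2 h))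

theorem inGap_inl (i : Fin (d + 1)) (a : α i) : InGap (mark (α := α)) i (inl i a) := by
  refine ⟨fun j hj => Sigma.Lex.lt_def.2 (.inl hj), fun j hj => Sigma.Lex.lt_def.2 ?_⟩
  rcases (show (i : ℕ) ≤ j.castSucc from hj).lt_or_eq with h | h
  · exact .inl h
  · obtain rfl := Fin.ext h
    exact .inr ⟨rfl, Sum.Lex.inl_lt_inr _ _⟩

theorem inGap_iff {i : Fin (d + 1)} {p : Glue d α} :
    InGap (mark (α := α)) i p ↔ ∃ a, inl i a = p := by
  refine ⟨fun hp => ?_, fun ⟨a, ha⟩ => ha ▸ inGap_inl i a⟩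
  rcases p with ⟨i', a | ⟨j, rfl⟩⟩
  · obtain rfl := (inGap_inl i' a).unique hp
    exact ⟨a, rfl⟩
  · exact (hp.ne_apply j rfl).elim

theorem card_inGap [∀ i, Fintype (α i)] (i : Fin (d + 1)) :
    Fintype.card {p : Glue d α // InGap mark i p} = Fintype.card (α i) :=
  (Fintype.card_congr <| .ofBijective (fun a => ⟨inl i a, inGap_inl i a⟩)
    ⟨fun _ _ h => (inl i).injective (congrArg Subtype.val h),
      fun p => (inGap_iff.1 p.2).imp fun _ => Subtype.ext⟩).symm

def desc (lam : Fin d → β) (g : ∀ i, α i → β) (p : Glue d α) : β :=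
  Sum.elim (g (ofLex p).1) (fun j => lam j.1) (ofLex (ofLex p).2)

theorem desc_strictMono {lam : Fin d → β} (hlam : StrictMono lam) {g : ∀ i, α i → β}
    (hg : ∀ i, StrictMono (g i)) (hgap : ∀ i a, InGap lam i (g i a)) :
    StrictMono (desc lam g) := by
  have below : ∀ (i : Fin (d + 1)) u (j : Fin d), (j : ℕ) < i →
      lam j < desc lam g (toLex ⟨i, u⟩) := by
    rintro i (a | ⟨j', rfl⟩) j hj
    exacts [(hgap _ a).1 j hj, hlam hj]
  have above : ∀ (i : Fin (d + 1)) u (j : Fin d), (i : ℕ) ≤ j →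
      desc lam g (toLex ⟨i, u⟩) ≤ lam j := by
    rintro i (a | ⟨j', rfl⟩) j hj
    exacts [((hgap _ a).2 j hj).le, hlam.monotone hj]
  rintro ⟨i, u⟩ ⟨i', v⟩ h
  rcases Sigma.Lex.lt_def.1 h with hi | ⟨hii, h⟩
  · have hid : (i : ℕ) < d := lt_of_lt_of_le hi (Nat.lt_succ_iff.mp i'.2)
    exact (above i u ⟨i, hid⟩ le_rfl).trans_lt (below i' v ⟨i, hid⟩ hi)
  obtain rfl : i = i' := hii
  rcases u with a | ⟨j, rfl⟩ <;> rcases v with b | ⟨j', hj'⟩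
  · exact hg _ (Sum.Lex.inl_lt_inl_iff.1 h)
  · exact (hgap _ a).2 j' (congrArg Fin.val hj').ge
  · exact absurd h Sum.Lex.not_inr_lt_inl
  · exact ((Sum.Lex.inr_lt_inr_iff.1 h).ne
      (Subtype.ext (Fin.castSucc_injective _ hj').symm)).elim

def map (f : ∀ i, α i ↪o α' i) : Glue d α ↪o Glue d α' :=
  OrderEmbedding.ofStrictMono (desc mark fun i => inl i ∘ f i)
    (desc_strictMono mark.strictMono (fun i => (inl i).strictMono.comp (f i).strictMono)
      fun i a => inGap_inl i (f i a))

end Glue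

section GlueGaps

variable {d : ℕ} {β β' : Type*} [LinearOrder β] [LinearOrder β']

def gapMap {lam : Fin d → β} {lam' : Fin d → β'} (e : β ↪o β') (he : ∀ j, e (lam j) = lam' j)
    (i : Fin (d + 1)) : {x // InGap lam i x} ↪o {x // InGap lam' i x} :=
  OrderEmbedding.ofStrictMono (fun x => ⟨e x, x.2.map e he⟩) fun _ _ h => e.strictMono h

noncomputable def glueGapsIso (lam : Fin d ↪o β) : Glue d (fun i => {x // InGap lam i x}) ≃o β :=
  (Glue.desc_strictMono lam.strictMono (fun _ => Subtype.strictMono_coe _) fun _ a => a.2)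
    |>.orderIsoOfSurjective _ fun x => by
      rcases exists_eq_or_inGap lam.monotone x with ⟨j, rfl⟩ | ⟨i, hx⟩
      exacts [⟨Glue.mark j, rfl⟩, ⟨Glue.inl i ⟨x, hx⟩, rfl⟩]

theorem glueGapsIso_mark (lam : Fin d ↪o β) (j : Fin d) :
    glueGapsIso lam (Glue.mark j) = lam j := rfl

theorem apply_glueGapsIso {lam : Fin d ↪o β} {lam' : Fin d ↪o β'} (e : β ↪o β')
    (he : ∀ j, e (lam j) = lam' j) (p : Glue d fun i => {x // InGap lam i x}) :
    e (glueGapsIso lam p) = glueGapsIso lam' (Glue.map (gapMap e he) p) := by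
  rcases p with ⟨i, x | ⟨j, rfl⟩⟩
  exacts [rfl, he j]

end GlueGaps

def OrderIso.embeddingCongr {α β γ δ : Type*} [Preorder α] [Preorder β] [Preorder γ]
    [Preorder δ] (e₁ : α ≃o β) (e₂ : γ ≃o δ) : (α ↪o γ) ≃ (β ↪o δ) where
  toFun f := (e₁.symm.toOrderEmbedding.trans f).trans e₂.toOrderEmbedding
  invFun f := (e₁.toOrderEmbedding.trans f).trans e₂.symm.toOrderEmbedding
  left_inv f := by ext; simp
  right_inv f := by ext; simp

namespace OId

variable {d : ℕ}

abbrev gap (X : OId d) (i : Fin (d + 1)) : Type := {x : Fin X.len // InGap X.lam i x}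

noncomputable def homEquivGaps (X Y : OId d) : (X ⟶ Y) ≃ ∀ i, X.gap i ↪o Y.gap i where
  toFun f := gapMap (emb f) f.2
  invFun h := ⟨((glueGapsIso X.lam).symm.toOrderEmbedding.trans (Glue.map h)).trans
      (glueGapsIso Y.lam).toOrderEmbedding, fun j => by
    show glueGapsIso Y.lam (Glue.map h ((glueGapsIso X.lam).symm (X.lam j))) = Y.lam j
    rw [← glueGapsIso_mark X.lam j, OrderIso.symm_apply_apply]
    rfl⟩
  left_inv f := by
    refine hom_ext _ _ fun x => ?_
    obtain ⟨p, rfl⟩ := (glueGapsIso X.lam).surjective x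
    show glueGapsIso Y.lam (Glue.map _ ((glueGapsIso X.lam).symm (glueGapsIso X.lam p))) = _
    rw [OrderIso.symm_apply_apply, apply_glueGapsIso (emb f) f.2]
  right_inv h := by
    funext i
    refine RelEmbedding.ext fun x => Subtype.ext ?_
    show (glueGapsIso Y.lam (Glue.map h ((glueGapsIso X.lam).symm (glueGapsIso X.lam
      (Glue.inl i x)))) : Fin Y.len) = h i x
    rw [OrderIso.symm_apply_apply]
    rfl

noncomputable def gapEnum (X : OId d) (i : Fin (d + 1)) :
    Fin (Fintype.card (X.gap i)) ≃o X.gap i :=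
  monoEquivOfFin _ rfl

noncomputable def homEquivFin (X Y : OId d) :
    (X ⟶ Y) ≃ ∀ i, Fin (Fintype.card (X.gap i)) ↪o Fin (Fintype.card (Y.gap i)) :=
  (homEquivGaps X Y).trans <| .piCongrRight fun i =>
    (X.gapEnum i).symm.embeddingCongr (Y.gapEnum i).symm

noncomputable def gapFunctor (d : ℕ) : OId d ⥤ (Fin (d + 1) → OI) where
  obj X i := OI.mk (Fintype.card (X.gap i))
  map {X Y} f := homEquivFin X Y f
  map_id X := by
    funext i
    exact OI.hom_ext _ _ fun k => (X.gapEnum i).symm_apply_apply k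
  map_comp {X Y Z} f g := by
    funext i
    refine OI.hom_ext _ _ fun k => congrArg (Z.gapEnum i).symm (Subtype.ext ?_)
    show emb g (emb f (X.gapEnum i k)) = emb g (Y.gapEnum i ((Y.gapEnum i).symm _))
    rw [OrderIso.apply_symm_apply]
    rfl

theorem gapFunctor_obj (X : OId d) (i : Fin (d + 1)) :
    (gapFunctor d).obj X i = OI.mk (Fintype.card (X.gap i)) := rfl

instance : (gapFunctor d).Faithful := ⟨fun h => (homEquivFin _ _).injective h⟩

instance : (gapFunctor d).Full := ⟨fun {X Y} φ => (homEquivFin X Y).surjective φ⟩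

noncomputable def ofOrder {β : Type*} [LinearOrder β] [Fintype β] (lam : Fin d ↪o β) : OId d :=
  ⟨Fintype.card β, lam.trans (monoEquivOfFin β rfl).symm.toOrderEmbedding⟩

theorem card_gap_ofOrder {β : Type*} [LinearOrder β] [Fintype β] (lam : Fin d ↪o β)
    (i : Fin (d + 1)) :
    Fintype.card ((ofOrder lam).gap i) = Fintype.card {x // InGap lam i x} :=
  (Fintype.card_congr <| (monoEquivOfFin β rfl).symm.toEquiv.subtypeEquiv fun _ =>
    (InGap.orderIso_iff _).symm).symm

instance : (gapFunctor d).EssSurj where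
  mem_essImage n :=
    ⟨ofOrder (Glue.mark (α := fun i => Fin (n i).len)), ⟨eqToIso <| funext fun i => by
      rw [gapFunctor_obj, card_gap_ofOrder, Glue.card_inGap, Fintype.card_fin]
      rfl⟩⟩

instance : (gapFunctor d).IsEquivalence where

end OId

/-- For every `d ≥ 0` there is an equivalence of categories `OI(d) ≃ OI^(d+1)`, sending
`(S, λ)` to the tuple `(S₁, …, S_{d+1})`, where `Sᵢ = {x ∈ S : λ_{i-1} < x < λᵢ}` (with
the conventions `λ₀ < x` and `x < λ_{d+1}` for all `x ∈ S`). -/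
theorem oid_equivalence_oi_pow (d : ℕ) :
    ∃ e : OId d ≌ (Fin (d + 1) → OI),
      ∀ (X : OId d) (i : Fin (d + 1)),
        e.functor.obj X i = OI.mk (Fintype.card
          { x : Fin X.len // (∀ j : Fin d, (j : ℕ) < (i : ℕ) → X.lam j < x) ∧
              (∀ j : Fin d, (i : ℕ) ≤ (j : ℕ) → x < X.lam j) }) :=
  ⟨(OId.gapFunctor d).asEquivalence, OId.gapFunctor_obj⟩
end

section
/- For every d ≥ 0 and every noetherian commutative ring k, the category of OI(d)-modules over k is locally noetherian: every submodule of a finitely generated OI(d)-module is finitely generated. -/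
open CategoryTheory

universe u

/-!
OI(d) is a Gröbner category in the sense of Sam–Snowden. Morphisms `X ⟶ Y` are ordered
lexicographically by their values, an order that post-composition preserves strictly. Encoding
`f : X ⟶ Y` by the word that records, at each point of `Y`, whether it is marked and whether it
is hit by `f`, a subword embedding of the codes of `f` and `g` is a morphism `h` with
`f ≫ h = g` (it has to match the marked points and the images by counting), so Higman's lemma
well-quasi-orders the morphisms out of `X` by divisibility.

Over a Gröbner category, a subfunctor `S` of a finite sum of principal projectives is determined
among the subfunctors below it by its leading-coefficient ideals, one for each basis morphism,
and these are monotone for divisibility. A strictly increasing chain of subfunctors therefore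
gives a strictly increasing chain of monotone maps from a well-quasi-order to the ideals of the
noetherian ring `k`, and no such chain is infinite. Noetherianity passes to quotients and to
submodules, and a noetherian module is finitely generated.
-/

universe v w

instance Sigma.Lex.wellFoundedLT {ι : Type*} {α : ι → Type*} [LT ι] [∀ i, LT (α i)]
    [WellFoundedLT ι] [∀ i, WellFoundedLT (α i)] : WellFoundedLT (Σₗ i, α i) :=
  ⟨Subrelation.wf
    (fun {a b} (h : Sigma.Lex (· < ·) (fun _ => (· < ·)) a b) => by
      obtain ⟨i, a⟩ := a
      obtain ⟨j, b⟩ := b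
      cases h with
      | left _ _ hij => exact PSigma.Lex.left _ _ hij
      | right _ _ hab => exact PSigma.Lex.right _ hab)
    (InvImage.wf (fun a : Σₗ i, α i => (⟨(ofLex a).1, (ofLex a).2⟩ : Σ' i, α i))
      (PSigma.lex ⟨_, wellFounded_lt⟩ fun _ => ⟨_, wellFounded_lt⟩).wf)⟩

theorem WellQuasiOrdered.of_finite_cover {ι β : Type*} [Finite ι] {α : ι → Type*}
    {r : β → β → Prop} (f : ∀ i, α i → β) (hf : ∀ b, ∃ i a, f i a = b)
    (h : ∀ i, WellQuasiOrdered fun a a' => r (f i a) (f i a')) : WellQuasiOrdered r := by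
  cases nonempty_fintype ι
  have hcover : (Set.univ : Set β) = Finset.univ.sup fun i => Set.range (f i) := by
    ext b
    obtain ⟨i, a, rfl⟩ := hf b
    simp only [Set.mem_univ, Finset.sup_set_eq_biUnion, Finset.mem_univ, Set.iUnion_true,
      Set.mem_iUnion, Set.mem_range, true_iff]
    exact ⟨i, a, rfl⟩
  rw [← Set.partiallyWellOrderedOn_univ_iff, hcover, Finset.partiallyWellOrderedOn_sup]
  intro i _
  rw [← Set.image_univ]
  exact (Set.partiallyWellOrderedOn_univ_iff.2 (h i)).image_of_monotone_on fun _ _ _ _ => id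

theorem WellQuasiOrdered.wellFoundedGT_monotone {α L : Type*} {r : α → α → Prop}
    [IsPreorder α r] (hr : WellQuasiOrdered r) [PartialOrder L] [WellFoundedGT L] :
    WellFoundedGT {f : α → L // ∀ a b, r a b → f a ≤ f b} := by
  refine ⟨RelEmbedding.wellFounded_iff_isEmpty.2 ⟨fun F => ?_⟩⟩
  have hF : StrictMono F := fun _ _ h => F.map_rel_iff.2 h
  choose q hq using fun n : ℕ => (Pi.lt_def.1 (hF n.lt_succ_self)).2
  obtain ⟨g, hg⟩ := hr.exists_monotone_subseq q
  refine not_strictMono_of_wellFoundedGT (fun s => (F (g s + 1)).1 (q (g s)))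
    (strictMono_nat_of_lt_succ fun s => ?_)
  calc (F (g s + 1)).1 (q (g s))
      ≤ (F (g (s + 1))).1 (q (g s)) := hF.monotone (g.strictMono s.lt_succ_self) _
    _ ≤ (F (g (s + 1))).1 (q (g (s + 1))) := (F _).2 _ _ (hg _ _ s.le_succ)
    _ < (F (g (s + 1) + 1)).1 (q (g (s + 1))) := hq _

theorem List.wellQuasiOrdered_sublist {α : Type*} [Finite α] :
    WellQuasiOrdered (@List.Sublist α) := by
  have := (Set.partiallyWellOrderedOn_univ_iff.2 (Finite.wellQuasiOrdered (α := α) (· = ·))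
    ).partiallyWellOrderedOn_sublistForall₂ (· = ·)
  simp only [Set.mem_univ, implies_true, Set.ofPred_true, Set.partiallyWellOrderedOn_univ_iff]
    at this
  exact fun F => (this F).imp fun _ ⟨n, hmn, h⟩ =>
    ⟨n, hmn, by simpa [List.sublistForall₂_iff, List.forall₂_eq_eq_eq] using h⟩

theorem List.exists_orderEmbedding_of_ofFn_sublist {α : Type*} {n m : ℕ} {u : Fin n → α}
    {w : Fin m → α} (h : (List.ofFn u).Sublist (List.ofFn w)) :
    ∃ e : Fin n ↪o Fin m, ∀ i, w (e i) = u i := by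
  obtain ⟨e, he⟩ := List.sublist_iff_exists_fin_orderEmbedding_get_eq.1 h
  refine ⟨(Fin.castOrderIso List.length_ofFn.symm).toOrderEmbedding.trans
    (e.trans (Fin.castOrderIso List.length_ofFn).toOrderEmbedding), fun i => ?_⟩
  have := (he (Fin.cast List.length_ofFn.symm i)).symm
  simp only [List.get_ofFn] at this
  exact this

theorem OrderEmbedding.trans_eq_of_mem_range_iff {α β γ : Type*} [LinearOrder α] [Finite α]
    [Preorder β] [Preorder γ] (u : α ↪o β) (u' : α ↪o γ) (e : β ↪o γ)
    (he : ∀ p, e p ∈ Set.range u' ↔ p ∈ Set.range u) : u.trans e = u' := by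
  have := Finite.to_wellFoundedLT (α := α)
  have hsub : Set.range (u.trans e) ⊆ Set.range u' := by
    rintro _ ⟨i, rfl⟩
    exact (he _).2 ⟨i, rfl⟩
  have hcard : (Set.range u').ncard ≤ (Set.range (u.trans e)).ncard := by
    rw [Set.ncard_range_of_injective u'.injective,
      Set.ncard_range_of_injective (u.trans e).injective]
  exact OrderEmbedding.range_inj.1 (Set.eq_of_subset_of_ncard_le hsub hcard (Set.toFinite _))

namespace Finsupp

variable {α β R : Type*} [LinearOrder α] [Ring R]

noncomputable def leadingCoeffIdeal (S : Submodule R (α →₀ R)) (e : α) : Ideal R :=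
  (S ⊓ supported R R (Set.Iic e)).map (lapply e)

theorem leadingCoeffIdeal_mono {S T : Submodule R (α →₀ R)} (hST : S ≤ T) (e : α) :
    leadingCoeffIdeal S e ≤ leadingCoeffIdeal T e :=
  Submodule.map_mono (inf_le_inf_right _ hST)

theorem leadingCoeffIdeal_le_of_map_le [LinearOrder β] {f : α → β} (hf : StrictMono f)
    {S : Submodule R (α →₀ R)} {T : Submodule R (β →₀ R)}
    (hST : S.map (lmapDomain R R f) ≤ T) (e : α) :
    leadingCoeffIdeal S e ≤ leadingCoeffIdeal T (f e) := by
  classical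
  rintro _ ⟨v, ⟨hvS, hv⟩, rfl⟩
  refine ⟨mapDomain f v, ⟨hST ⟨v, hvS, rfl⟩, fun a ha => ?_⟩,
    mapDomain_apply hf.injective v e⟩
  obtain ⟨b, hb, rfl⟩ := Finset.mem_image.1 (mapDomain_support ha)
  exact hf.monotone (hv hb)

theorem le_of_leadingCoeffIdeal_le [WellFoundedLT α] {S T : Submodule R (α →₀ R)}
    (hST : S ≤ T) (h : ∀ e, leadingCoeffIdeal T e ≤ leadingCoeffIdeal S e) : T ≤ S := by
  intro v hvT
  induction hm : v.support.max using WellFoundedLT.induction generalizing v with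
  | ind m ih =>
    cases m with
    | bot =>
      rw [Finset.max_eq_bot, support_eq_empty] at hm
      exact hm ▸ S.zero_mem
    | coe e =>
      have hv : v ∈ supported R R (Set.Iic e) := fun a ha => Finset.le_max_of_eq ha hm
      obtain ⟨w, ⟨hwS, hw⟩, hwe : w e = v e⟩ := h e ⟨v, ⟨hvT, hv⟩, rfl⟩
      -- `v - w` lies in `T` and, having lost its coefficient at `e`, is supported below `e`.
      have hlt : (v - w).support.max < e := by
        rw [Finset.max_eq_sup_withBot, Finset.sup_lt_iff (WithBot.bot_lt_coe e)]
        intro a ha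
        have hae : a ≠ e := by
          rintro rfl
          exact mem_support_iff.1 ha (by rw [sub_apply, hwe, sub_self])
        have hle : a ≤ e := (Finset.mem_union.1 (support_sub ha)).elim (hv ·) (hw ·)
        exact WithBot.coe_lt_coe.2 (hle.lt_of_ne hae)
      simpa using S.add_mem (ih _ hlt (T.sub_mem hvT (hST hwS)) rfl) hwS

end Finsupp

namespace CategoryTheory

/-- The Gröbner categories of Sam–Snowden. -/
structure IsGrobner (C : Type*) [Category C] [∀ x y : C, LinearOrder (x ⟶ y)] : Prop where
  wellFoundedLT_hom (x y : C) : WellFoundedLT (x ⟶ y)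
  comp_strictMono {x y z : C} (h : y ⟶ z) : StrictMono fun f : x ⟶ y => f ≫ h
  wellQuasiOrdered_under (x : C) :
    WellQuasiOrdered fun a b : Σ y, x ⟶ y => ∃ h : a.1 ⟶ b.1, a.2 ≫ h = b.2

end CategoryTheory

namespace CatModule

section Subfunctor

variable {C : Type*} [Category C] {k : Type u} [Ring k]

@[ext]
structure Subfunctor (M : C ⥤ ModuleCat.{w} k) where
  obj : ∀ y, Submodule k (M.obj y)
  map_mem : ∀ {y z} (h : y ⟶ z) {v : M.obj y}, v ∈ obj y → M.map h v ∈ obj z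

namespace Subfunctor

variable {M N : C ⥤ ModuleCat.{w} k}

instance : PartialOrder (Subfunctor M) := PartialOrder.lift obj fun _ _ => Subfunctor.ext

def comap (φ : N ⟶ M) (S : Subfunctor M) : Subfunctor N where
  obj y := (S.obj y).comap (φ.app y).hom
  map_mem h v hv := by
    simpa [Submodule.mem_comap, NatTrans.naturality_apply] using S.map_mem h hv

def map (φ : N ⟶ M) (S : Subfunctor N) : Subfunctor M where
  obj y := (S.obj y).map (φ.app y).hom
  map_mem h := by
    rintro _ ⟨v, hv, rfl⟩
    exact ⟨N.map h v, S.map_mem h hv, by simp [NatTrans.naturality_apply]⟩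

theorem comap_strictMono (φ : N ⟶ M) [Epi φ] : StrictMono (comap φ) := by
  refine Monotone.strictMono_of_injective (fun S T hST y => Submodule.comap_mono (hST y))
    fun S T hST => Subfunctor.ext (funext fun y => ?_)
  have hφ := (ModuleCat.epi_iff_surjective (φ.app y)).1 inferInstance
  rw [← Submodule.map_comap_eq_of_surjective hφ (S.obj y),
    ← Submodule.map_comap_eq_of_surjective hφ (T.obj y)]
  exact congrArg (fun S => Submodule.map _ (Subfunctor.obj S y)) hST

theorem map_strictMono (ι : N ⟶ M) [Mono ι] : StrictMono (map ι) := by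
  refine Monotone.strictMono_of_injective (fun S T hST y => Submodule.map_mono (hST y))
    fun S T hST => Subfunctor.ext (funext fun y => ?_)
  have hι := (ModuleCat.mono_iff_injective (ι.app y)).1 inferInstance
  rw [← Submodule.comap_map_eq_of_injective hι (S.obj y),
    ← Submodule.comap_map_eq_of_injective hι (T.obj y)]
  exact congrArg (fun S => Submodule.comap _ (Subfunctor.obj S y)) hST

def span (s : Set (Σ y, M.obj y)) : Subfunctor M where
  obj z := Submodule.span k {v | ∃ p ∈ s, ∃ f : p.1 ⟶ z, M.map f p.2 = v}
  map_mem h v hv := by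
    refine Submodule.span_mono ?_ (Submodule.apply_mem_span_image_of_mem_span (M.map h).hom hv)
    rintro _ ⟨_, ⟨p, hp, f, rfl⟩, rfl⟩
    exact ⟨p, hp, f ≫ h, by simp⟩

theorem span_mono {s t : Set (Σ y, M.obj y)} (hst : s ⊆ t) : span s ≤ span t := fun _ =>
  Submodule.span_mono fun _ ⟨p, hp, f, hf⟩ => ⟨p, hst hp, f, hf⟩

theorem mem_span_self {s : Set (Σ y, M.obj y)} {p : Σ y, M.obj y} (hp : p ∈ s) :
    p.2 ∈ (span s).obj p.1 :=
  Submodule.subset_span ⟨p, hp, 𝟙 p.1, by simp⟩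

end Subfunctor

end Subfunctor

section FG

variable {C : Type*} [Category C] {k : Type u} [CommRing k] {M : C ⥤ ModuleCat.{u} k}

theorem fg_of_span_list_eq_top (L : List (Σ y, M.obj y))
    (hL : ∀ y, (Subfunctor.span {p | p ∈ L}).obj y = ⊤) : FG M := by
  refine ⟨L.length, fun j => (L.get j).1, fun j => (L.get j).2, fun y => ?_⟩
  rw [← hL y]
  congr 1
  ext v
  constructor
  · rintro ⟨j, f, rfl⟩
    exact ⟨L.get j, L.get_mem j, f, rfl⟩
  · rintro ⟨p, hp, f, rfl⟩
    obtain ⟨j, rfl⟩ := List.mem_iff_get.1 hp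
    exact ⟨j, f, rfl⟩

theorem fg_of_wellFoundedGT [WellFoundedGT (Subfunctor M)] : FG M := by
  obtain ⟨_, ⟨L, rfl⟩, hmax⟩ := wellFounded_gt.has_min
    {S | ∃ L : List (Σ y, M.obj y), Subfunctor.span {p | p ∈ L} = S} ⟨_, [], rfl⟩
  refine fg_of_span_list_eq_top L fun y => eq_top_iff.2 fun v _ => ?_
  have hle : Subfunctor.span {p | p ∈ L} ≤ Subfunctor.span {p | p ∈ ⟨y, v⟩ :: L} :=
    Subfunctor.span_mono fun _ => List.mem_cons_of_mem _
  rw [hle.eq_of_not_lt (hmax _ ⟨_, rfl⟩)]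
  exact Subfunctor.mem_span_self (p := ⟨y, v⟩) List.mem_cons_self

end FG

section Free

variable {C : Type*} [Category.{v} C] {r : ℕ}

/-- A basis element `f : xᵢ ⟶ y` of the free module `⊕ᵢ k[Hom(xᵢ, y)]`. -/
structure Monomial (x : Fin r → C) (y : C) : Type v where
  idx : Fin r
  hom : x idx ⟶ y

namespace Monomial

variable {x : Fin r → C} {y z : C}

def map (h : y ⟶ z) (e : Monomial x y) : Monomial x z := ⟨e.idx, e.hom ≫ h⟩

@[simp]
theorem map_id (e : Monomial x y) : e.map (𝟙 y) = e := by
  rw [map, Category.comp_id]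

@[simp]
theorem map_map {w : C} (h : y ⟶ z) (h' : z ⟶ w) (e : Monomial x y) :
    (e.map h).map h' = e.map (h ≫ h') := by
  rw [map, map, map, Category.assoc]

def Divides (a b : Σ y, Monomial x y) : Prop := ∃ h : a.1 ⟶ b.1, a.2.map h = b.2

instance : IsPreorder (Σ y, Monomial x y) Divides where
  refl a := ⟨𝟙 a.1, map_id a.2⟩
  trans _ _ _ := fun ⟨h, hab⟩ ⟨h', hbc⟩ => ⟨h ≫ h', by rw [← map_map, hab, hbc]⟩

def toLex (e : Monomial x y) : Σₗ i, (x i ⟶ y) := _root_.toLex ⟨e.idx, e.hom⟩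

theorem toLex_injective : Function.Injective (toLex (x := x) (y := y)) := by
  rintro ⟨i, f⟩ ⟨j, g⟩ h
  cases h
  rfl

variable [∀ x y : C, LinearOrder (x ⟶ y)]

instance : LinearOrder (Monomial x y) := LinearOrder.lift' toLex toLex_injective

theorem wellFoundedLT (hC : IsGrobner C) : WellFoundedLT (Monomial x y) :=
  have := hC.wellFoundedLT_hom
  ⟨InvImage.wf toLex wellFounded_lt⟩

theorem map_strictMono (hC : IsGrobner C) (h : y ⟶ z) : StrictMono (map (x := x) h) := by
  rintro ⟨i, f⟩ ⟨j, g⟩ (hlt : Sigma.Lex _ _ _ _)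
  cases hlt with
  | left _ _ hij => exact Sigma.Lex.left _ _ hij
  | right _ _ hfg => exact Sigma.Lex.right _ _ (hC.comp_strictMono h hfg)

theorem wellQuasiOrdered_divides (hC : IsGrobner C) : WellQuasiOrdered (Divides (x := x)) := by
  refine WellQuasiOrdered.of_finite_cover (fun i (a : Σ y, x i ⟶ y) => ⟨a.1, ⟨i, a.2⟩⟩)
    (fun ⟨y, i, f⟩ => ⟨i, ⟨y, f⟩, rfl⟩) fun i => ?_
  convert hC.wellQuasiOrdered_under (x i) using 5
  simp [Divides, map]

end Monomial

variable (k : Type u) [Ring k]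

/-- The finite sum `⊕ᵢ P_{xᵢ}` of principal projectives. -/
noncomputable def free (x : Fin r → C) : C ⥤ ModuleCat.{max v u} k where
  obj y := ModuleCat.of k (Monomial x y →₀ k)
  map h := ModuleCat.ofHom (Finsupp.lmapDomain k k (Monomial.map h))
  map_id y := by
    ext : 1
    refine Finsupp.lhom_ext fun e c => ?_
    simp
  map_comp h h' := by
    ext : 1
    refine Finsupp.lhom_ext fun e c => ?_
    simp

variable {k} {x : Fin r → C}

/-- The map sending the basis element `𝟙 (x i)` to `m i`. -/
noncomputable def freeDesc {M : C ⥤ ModuleCat.{max v u} k} (m : ∀ i, M.obj (x i)) :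
    free k x ⟶ M where
  app y := ModuleCat.ofHom (Finsupp.linearCombination k fun e : Monomial x y =>
    M.map e.hom (m e.idx))
  naturality y z h := by
    ext : 1
    refine Finsupp.lhom_ext fun e c => ?_
    simp only [free, ModuleCat.hom_comp, ModuleCat.hom_ofHom, LinearMap.comp_apply,
      Finsupp.lmapDomain_apply, Finsupp.mapDomain_single, Finsupp.linearCombination_single]
    simp only [Monomial.map, Functor.map_comp, map_smul]
    rfl

theorem epi_freeDesc {M : C ⥤ ModuleCat.{max v u} k} {m : ∀ i, M.obj (x i)}
    (hm : ∀ y, Submodule.span k {v | ∃ (i : Fin r) (f : x i ⟶ y), M.map f (m i) = v} = ⊤) :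
    Epi (freeDesc m) := by
  have (y : C) : Epi ((freeDesc m).app y) := by
    rw [ModuleCat.epi_iff_surjective, ← LinearMap.range_eq_top]
    change LinearMap.range (Finsupp.linearCombination k _) = ⊤
    rw [Finsupp.range_linearCombination, ← hm y]
    congr 1
    ext v
    exact ⟨fun ⟨e, he⟩ => ⟨e.idx, e.hom, he⟩,
      fun ⟨i, f, hf⟩ => ⟨⟨i, f⟩, hf⟩⟩
  exact NatTrans.epi_of_epi_app _

variable [∀ x y : C, LinearOrder (x ⟶ y)]

noncomputable def Subfunctor.leadingCoeffIdeals (S : Subfunctor (free k x))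
    (q : Σ y, Monomial x y) : Ideal k :=
  Finsupp.leadingCoeffIdeal (S.obj q.1) q.2

theorem Subfunctor.leadingCoeffIdeals_le_of_divides (hC : IsGrobner C) (S : Subfunctor (free k x))
    {a b : Σ y, Monomial x y} (hab : Monomial.Divides a b) :
    S.leadingCoeffIdeals a ≤ S.leadingCoeffIdeals b := by
  obtain ⟨y, e⟩ := a
  obtain ⟨z, f⟩ := b
  obtain ⟨h, rfl⟩ : ∃ h : y ⟶ z, e.map h = f := hab
  exact Finsupp.leadingCoeffIdeal_le_of_map_le (Monomial.map_strictMono hC h)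
    (Submodule.map_le_iff_le_comap.2 fun _ => S.map_mem h) e

theorem Subfunctor.leadingCoeffIdeals_strictMono (hC : IsGrobner C) :
    StrictMono (leadingCoeffIdeals (k := k) (x := x)) := by
  intro S T hST
  have hle : S.leadingCoeffIdeals ≤ T.leadingCoeffIdeals := fun q =>
    Finsupp.leadingCoeffIdeal_mono (hST.le q.1) q.2
  refine hle.lt_of_ne fun heq => hST.ne (le_antisymm hST.le fun y => ?_)
  have := Monomial.wellFoundedLT (x := x) (y := y) hC
  exact Finsupp.le_of_leadingCoeffIdeal_le (hST.le y) fun e => (congrFun heq ⟨y, e⟩).ge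

theorem wellFoundedGT_subfunctor_free [IsNoetherianRing k] (hC : IsGrobner C) (x : Fin r → C) :
    WellFoundedGT (Subfunctor (free k x)) :=
  have := (Monomial.wellQuasiOrdered_divides (x := x) hC).wellFoundedGT_monotone (L := Ideal k)
  StrictMono.wellFoundedGT
    (β := {I : (Σ y, Monomial x y) → Ideal k // ∀ a b, Monomial.Divides a b → I a ≤ I b})
    (f := fun S => ⟨S.leadingCoeffIdeals, fun _ _ => S.leadingCoeffIdeals_le_of_divides hC⟩)
    (Subfunctor.leadingCoeffIdeals_strictMono hC)

end Free

end CatModule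

namespace OId

variable {d : ℕ}

noncomputable instance (X Y : OId d) : LinearOrder (X ⟶ Y) :=
  LinearOrder.lift' (fun f => toLex ⇑(emb f)) fun f g h => hom_ext f g (congrFun h)

instance (X Y : OId d) : Finite (X ⟶ Y) :=
  Finite.of_injective (fun f => ⇑(emb f)) fun f g h => hom_ext f g (congrFun h)

theorem comp_strictMono {X Y Z : OId d} (h : Y ⟶ Z) : StrictMono fun f : X ⟶ Y => f ≫ h := by
  rintro f g ⟨i, hij, hi⟩
  exact ⟨i, fun j hj => congrArg (emb h) (hij j hj), (emb h).strictMono hi⟩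

def word {X Y : OId d} (f : X ⟶ Y) : List (Prop × Prop) :=
  List.ofFn fun p => (p ∈ Set.range Y.lam, p ∈ Set.range (emb f))

theorem exists_comp_eq_of_word_sublist {X Y Z : OId d} {f : X ⟶ Y} {g : X ⟶ Z}
    (hfg : (word f).Sublist (word g)) : ∃ h : Y ⟶ Z, f ≫ h = g := by
  obtain ⟨e, he⟩ := List.exists_orderEmbedding_of_ofFn_sublist hfg
  have hlam := Y.lam.trans_eq_of_mem_range_iff Z.lam e fun p =>
    iff_of_eq (congrArg Prod.fst (he p))
  have hf := (emb f).trans_eq_of_mem_range_iff (emb g) e fun p =>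
    iff_of_eq (congrArg Prod.snd (he p))
  exact ⟨⟨e, fun i => DFunLike.congr_fun hlam i⟩,
    hom_ext _ _ fun i => DFunLike.congr_fun hf i⟩

theorem isGrobner (d : ℕ) : IsGrobner (OId d) where
  wellFoundedLT_hom _ _ := Finite.to_wellFoundedLT
  comp_strictMono := comp_strictMono
  wellQuasiOrdered_under _ F :=
    (List.wellQuasiOrdered_sublist fun t => word (F t).2).imp fun _ ⟨n, hmn, h⟩ =>
      ⟨n, hmn, exists_comp_eq_of_word_sublist h⟩

end OId

/-- For every `d ≥ 0` and every noetherian commutative ring `k`, the category of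
`OI(d)`-modules over `k` is locally noetherian: every submodule of a finitely generated
`OI(d)`-module is finitely generated. -/
theorem oid_modules_locally_noetherian (d : ℕ) (k : Type u) [CommRing k]
    [IsNoetherianRing k] (M N : OId d ⥤ ModuleCat.{u} k) (ι : N ⟶ M)
    [Mono ι] (hM : CatModule.FG M) : CatModule.FG N := by
  obtain ⟨r, x, m, hm⟩ := hM
  have : WellFoundedGT (CatModule.Subfunctor (CatModule.free k x)) :=
    CatModule.wellFoundedGT_subfunctor_free (OId.isGrobner d) x
  have : Epi (CatModule.freeDesc m) := CatModule.epi_freeDesc hm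
  have : WellFoundedGT (CatModule.Subfunctor M) :=
    (CatModule.Subfunctor.comap_strictMono (CatModule.freeDesc m)).wellFoundedGT
  have : WellFoundedGT (CatModule.Subfunctor N) :=
    (CatModule.Subfunctor.map_strictMono ι).wellFoundedGT
  exact CatModule.fg_of_wellFoundedGT
end

section
/- Let k be a commutative ring and let M be an OI-module over k such that M_0 = M(∅) is a finitely generated k-module and the reduced shift Σ̄(M) is a finitely generated OI-module. Then M is a finitely generated OI-module. -/
open CategoryTheory

universe u

namespace OI

/-- Extend an order embedding `Fin n ↪o Fin m` to `Fin (n+1) ↪o Fin (m+1)` by sending the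
new maximal element to the new maximal element. -/
def extendTop {n m : ℕ} (f : Fin n ↪o Fin m) : Fin (n + 1) ↪o Fin (m + 1) :=
  OrderEmbedding.ofStrictMono
    (fun i => if h : (i : ℕ) < n then (f ⟨i, h⟩).castSucc else Fin.last m)
    (by
      intro i j hij
      by_cases hi : (i : ℕ) < n
      · by_cases hj : (j : ℕ) < n
        · simp only [dif_pos hi, dif_pos hj]
          exact Fin.castSucc_lt_castSucc_iff.mpr (f.strictMono hij)
        · simp only [dif_pos hi, dif_neg hj]
          exact Fin.castSucc_lt_last _
      · exfalso
        have h1 : (i : ℕ) < (j : ℕ) := hij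
        have h2 : (j : ℕ) < n + 1 := j.isLt
        omega)

theorem extendTop_apply {n m : ℕ} (f : Fin n ↪o Fin m) (i : Fin (n + 1)) :
    extendTop f i =
      if h : (i : ℕ) < n then (f ⟨i, h⟩).castSucc else Fin.last m := rfl

/-- The shift endofunctor `Σ₀` of `OI`, `S ↦ S ⊔ {∞}` with `∞` a new maximal element. -/
def shiftFunctor : OI ⥤ OI where
  obj n := OI.mk (n.len + 1)
  map f := extendTop (OI.emb f)
  map_id n := by
    apply OI.hom_ext
    intro i
    show extendTop (OI.emb (𝟙 n)) i = i
    rw [extendTop_apply (OI.emb (𝟙 n)) i]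
    split_ifs with h
    · exact Fin.ext rfl
    · have h2 : (i : ℕ) < n.len + 1 := i.isLt
      exact Fin.ext (by simp only [Fin.val_last]; omega)
  map_comp {a b c} f g := by
    apply OI.hom_ext
    intro i
    show extendTop (OI.emb (f ≫ g)) i = extendTop (OI.emb g) (extendTop (OI.emb f) i)
    by_cases h : (i : ℕ) < a.len
    · have h2 : (((OI.emb f) ⟨i, h⟩).castSucc : ℕ) < b.len := by
        simpa using ((OI.emb f) ⟨i, h⟩).isLt
      have e1 : extendTop (OI.emb f) i = ((OI.emb f) ⟨i, h⟩).castSucc :=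
        (extendTop_apply _ _).trans (dif_pos h)
      conv_lhs => rw [(extendTop_apply (OI.emb (f ≫ g)) i).trans (dif_pos h)]
      conv_rhs => rw [e1, extendTop_apply, dif_pos h2]
      exact congrArg Fin.castSucc (congrArg (OI.emb g) (Fin.ext (by simp [OI.emb])))
    · have e1 : extendTop (OI.emb f) i = Fin.last b.len :=
        (extendTop_apply _ _).trans (dif_neg h)
      have h2 : ¬ (((Fin.last b.len) : Fin (b.len + 1)) : ℕ) < b.len := by simp
      conv_lhs => rw [(extendTop_apply (OI.emb (f ≫ g)) i).trans (dif_neg h)]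
      conv_rhs => rw [e1, extendTop_apply, dif_neg h2]

/-- The inclusion `S ↪ S ⊔ {∞}`, as a morphism in `OI`. -/
def inclTop (n : OI) : n ⟶ shiftFunctor.obj n :=
  (Fin.castSuccOrderEmb : Fin n.len ↪o Fin (n.len + 1))

theorem inclTop_natural {a b : OI} (f : a ⟶ b) :
    f ≫ inclTop b = inclTop a ≫ shiftFunctor.map f := by
  apply OI.hom_ext
  intro i
  show Fin.castSucc (OI.emb f i) = extendTop (OI.emb f) (Fin.castSucc i)
  have h : ((i.castSucc : Fin (a.len + 1)) : ℕ) < a.len := by simpa using i.isLt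
  rw [extendTop_apply, dif_pos h]
  exact congrArg Fin.castSucc (congrArg (OI.emb f) (Fin.ext (by simp)))

/-- For an `OI`-module `M`, the natural map `M ⟶ Σ(M)` induced by the inclusions
`S ↪ S ⊔ {∞}`; the reduced shift `Σ̄(M)` is its cokernel. -/
def shiftUnit {k : Type u} [CommRing k] (M : OI ⥤ ModuleCat.{u} k) :
    M ⟶ shiftFunctor ⋙ M where
  app n := M.map (inclTop n)
  naturality a b f := by
    show M.map f ≫ M.map (inclTop b) = M.map (inclTop a) ≫ M.map (shiftFunctor.map f)
    rw [← M.map_comp, ← M.map_comp, inclTop_natural]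

end OI

open CategoryTheory.Limits

/-!
Generators of `M ∅` together with lifts to `M (S ⊔ {∞})` of generators of `Σ̄ M` generate `M`.
By induction on `|S|`: modulo a combination of images of the lifts, an element of `M (S ⊔ {∞})`
lies in the kernel of `M (S ⊔ {∞}) → Σ̄ M (S)`, which is the image of `M S`, and `M S` is
generated by the induction hypothesis.
-/

namespace CatModule

variable {C : Type*} [Category C] {k : Type u} [CommRing k] (M : C ⥤ ModuleCat.{u} k)
  {ι : Type*} {x : ι → C}

def spanAt (m : ∀ i, M.obj (x i)) (y : C) : Submodule k (M.obj y) :=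
  Submodule.span k {v | ∃ (i : ι) (f : x i ⟶ y), M.map f (m i) = v}

variable {M}

theorem map_mem_spanAt (m : ∀ i, M.obj (x i)) (i : ι) {y : C} (f : x i ⟶ y) :
    M.map f (m i) ∈ spanAt M m y :=
  Submodule.subset_span ⟨i, f, rfl⟩

theorem mem_spanAt_self (m : ∀ i, M.obj (x i)) (i : ι) : m i ∈ spanAt M m (x i) := by
  simpa using map_mem_spanAt m i (𝟙 _)

theorem map_spanAt_le (m : ∀ i, M.obj (x i)) {y z : C} (f : y ⟶ z) :
    (spanAt M m y).map (M.map f).hom ≤ spanAt M m z := by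
  rw [spanAt, Submodule.map_span, Submodule.span_le]
  rintro _ ⟨_, ⟨i, g, rfl⟩, rfl⟩
  simpa using map_mem_spanAt m i (g ≫ f)

theorem fg_of_spanAt_eq_top [Finite ι] (m : ∀ i, M.obj (x i)) (h : ∀ y, spanAt M m y = ⊤) :
    FG M := by
  obtain ⟨r, ⟨e⟩⟩ := Finite.exists_equiv_fin ι
  refine ⟨r, x ∘ e.symm, fun i => m (e.symm i), fun y => ?_⟩
  rw [← h y, spanAt]
  simp only [Function.comp_apply, e.symm.surjective.exists]

end CatModule

section Cokernel

variable {C : Type*} [Category C] {k : Type u} [CommRing k] {F G : C ⥤ ModuleCat.{u} k}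

theorem cokernel_π_app_surjective (α : F ⟶ G) (y : C) :
    Function.Surjective ((cokernel.π α).app y) :=
  (ModuleCat.epi_iff_surjective _).1 inferInstance

theorem range_app_eq_ker_cokernel_π_app (α : F ⟶ G) (y : C) :
    LinearMap.range (α.app y).hom = LinearMap.ker ((cokernel.π α).app y).hom :=
  (ShortComplex.moduleCat_exact_iff_range_eq_ker _).1
    ((ShortComplex.exact_cokernel α).map ((evaluation C _).obj y))

end Cokernel

namespace OI

open CatModule

variable {k : Type u} [CommRing k] (M : OI ⥤ ModuleCat.{u} k)

theorem spanAt_eq_top_of_reducedShift {ι : Type*} {x : ι → OI} (m : ∀ i, M.obj (x i))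
    (h0 : spanAt M m (mk 0) = ⊤)
    (hshift : ∀ y,
      ⊤ ≤ (spanAt M m (shiftFunctor.obj y)).map ((cokernel.π (shiftUnit M)).app y).hom)
    (y : OI) : spanAt M m y = ⊤ := by
  suffices ∀ n, spanAt M m (mk n) = ⊤ from this y.len
  intro n
  induction n with
  | zero => exact h0
  | succ n ih =>
    have hker : LinearMap.ker ((cokernel.π (shiftUnit M)).app (mk n)).hom ≤
        spanAt M m (shiftFunctor.obj (mk n)) := by
      rw [← range_app_eq_ker_cokernel_π_app, LinearMap.range_eq_map, ← ih]
      exact map_spanAt_le m (inclTop (mk n))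
    have htop := (LinearMap.map_le_map_iff (p := ⊤) _).1 (le_top.trans (hshift (mk n)))
    exact top_le_iff.1 (htop.trans (sup_le le_rfl hker))

end OI

/-- Let `k` be a commutative ring and `M` an `OI`-module over `k` such that `M ∅` is a
finitely generated `k`-module and the reduced shift `Σ̄(M)` (the cokernel of the natural
map `M ⟶ Σ(M)`) is a finitely generated `OI`-module.  Then `M` is finitely generated. -/
theorem oi_module_fg_of_reducedShift_fg {k : Type u} [CommRing k]
    (M : OI ⥤ ModuleCat.{u} k) (h0 : Module.Finite k (M.obj (OI.mk 0)))
    (hshift : CatModule.FG (cokernel (OI.shiftUnit M))) :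
    CatModule.FG M := by
  obtain ⟨n₀, g, hg⟩ := Module.Finite.exists_fin (R := k) (M := M.obj (OI.mk 0))
  obtain ⟨r, x, m, hm⟩ := hshift
  choose m' hm' using fun i => cokernel_π_app_surjective (OI.shiftUnit M) (x i) (m i)
  let p : Fin n₀ ⊕ Fin r → Σ c : OI, M.obj c :=
    Sum.elim (fun j => ⟨OI.mk 0, g j⟩) (fun i => ⟨OI.shiftFunctor.obj (x i), m' i⟩)
  refine CatModule.fg_of_spanAt_eq_top (fun j => (p j).2)
    (OI.spanAt_eq_top_of_reducedShift M _ ?_ fun y => ?_)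
  · rw [eq_top_iff, ← hg, Submodule.span_le]
    rintro _ ⟨j, rfl⟩
    exact CatModule.mem_spanAt_self (fun j => (p j).2) (Sum.inl j)
  · rw [← hm y, Submodule.span_le]
    rintro _ ⟨i, f, rfl⟩
    refine ⟨M.map (OI.shiftFunctor.map f) (m' i), CatModule.map_mem_spanAt _ (Sum.inr i) _, ?_⟩
    rw [← hm' i]
    exact NatTrans.naturality_apply (cokernel.π (OI.shiftUnit M)) f (m' i)
end

section
/- Let S be a ring and k a commutative ring such that the category of OVI(S)-modules over k is locally noetherian. If there is a surjective ring homomorphism S → R, then the category of OVI(R)-modules over k is locally noetherian. -/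
/-!
Base change along `f : S → R` (apply `f` to matrix entries) is a functor
`F : OVI(S) ⥤ OVI(R)` that is bijective on objects, and full when `f` is surjective.
Restriction along `F` preserves monomorphisms, and by fullness it preserves finite
generation. Conversely, by essential surjectivity, an `OVI(R)`-module is finitely generated
as soon as its restriction along `F` is. So a submodule `N ⊆ M` of a finitely generated
`OVI(R)`-module restricts to a submodule of a finitely generated `OVI(S)`-module, which is
finitely generated by hypothesis, and hence `N` is finitely generated.
-/

open CategoryTheory

universe u

section OVIDef

variable {R : Type u} [Ring R]

theorem linearMap_apply_eq_sum {n m : ℕ} (ψ : (Fin n → R) →ₗ[R] (Fin m → R))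
    (w : Fin n → R) (s : Fin m) :
    ψ w s = ∑ r : Fin n, w r * ψ (Pi.single r 1) s := by
  have hw : w = ∑ r : Fin n, (w r) • (Pi.single r (1 : R) : Fin n → R) := by
    funext x
    simp [Finset.sum_apply, Pi.single_apply, mul_ite]
  conv_lhs => rw [hw]
  rw [map_sum]
  simp [Finset.sum_apply, smul_eq_mul]

/-- A linear map between ordered free `R`-modules is a morphism of `OVI(R)` if there is
an order-preserving injection `f₀` of the index sets such that the `i`-th basis vector is
sent to the `f₀(i)`-th basis vector plus lower order terms. -/
def IsOVIHom {n m : ℕ} (φ : (Fin n → R) →ₗ[R] (Fin m → R)) : Prop :=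
  ∃ f : Fin n ↪o Fin m, ∀ i : Fin n,
    φ (Pi.single i 1) (f i) = 1 ∧ ∀ r : Fin m, f i < r → φ (Pi.single i 1) r = 0

theorem isOVIHom_id (n : ℕ) : IsOVIHom (LinearMap.id : (Fin n → R) →ₗ[R] (Fin n → R)) := by
  refine ⟨RelEmbedding.refl _, fun i => ⟨Pi.single_eq_same i 1, fun r hr => ?_⟩⟩
  exact Pi.single_eq_of_ne hr.ne' 1

theorem isOVIHom_comp {n m p : ℕ} {φ : (Fin n → R) →ₗ[R] (Fin m → R)}
    {ψ : (Fin m → R) →ₗ[R] (Fin p → R)} (hφ : IsOVIHom φ) (hψ : IsOVIHom ψ) :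
    IsOVIHom (ψ ∘ₗ φ) := by
  obtain ⟨f, hf⟩ := hφ
  obtain ⟨g, hg⟩ := hψ
  refine ⟨f.trans g, fun i => ?_⟩
  have key : ∀ s : Fin p, (ψ ∘ₗ φ) (Pi.single i 1) s
      = ∑ r : Fin m, φ (Pi.single i 1) r * ψ (Pi.single r 1) s := fun s =>
    linearMap_apply_eq_sum ψ (φ (Pi.single i 1)) s
  constructor
  · have h1 : ∀ r : Fin m, r ∈ Finset.univ → r ≠ f i →
        φ (Pi.single i 1) r * ψ (Pi.single r 1) (g (f i)) = 0 := by
      intro r _ hr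
      rcases lt_or_gt_of_ne hr with h | h
      · have h2 : ψ (Pi.single r 1) (g (f i)) = 0 := (hg r).2 _ (g.strictMono h)
        rw [h2, mul_zero]
      · have h2 : φ (Pi.single i 1) r = 0 := (hf i).2 r h
        rw [h2, zero_mul]
    have h3 : ∑ r : Fin m, φ (Pi.single i 1) r * ψ (Pi.single r 1) (g (f i)) = 1 := by
      rw [Finset.sum_eq_single (f i) (fun r hmem hr => h1 r hmem hr) (by simp),
        (hf i).1, (hg (f i)).1, one_mul]
    exact (key (g (f i))).trans h3
  · intro s hs
    have h0 : ∑ r : Fin m, φ (Pi.single i 1) r * ψ (Pi.single r 1) s = 0 := by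
      apply Finset.sum_eq_zero
      intro r _
      rcases le_or_gt r (f i) with h | h
      · have h2 : ψ (Pi.single r 1) s = 0 := (hg r).2 s (lt_of_le_of_lt (g.monotone h) hs)
        rw [h2, mul_zero]
      · have h2 : φ (Pi.single i 1) r = 0 := (hf i).2 r h
        rw [h2, zero_mul]
    exact (key s).trans h0

end OVIDef

/-- The (skeletal model of the) category `OVI(R)` of finite rank free left `R`-modules
with a totally ordered basis: the object `n` represents `R^n` with its standard ordered
basis, and morphisms are the `R`-linear maps that send each basis vector to a basis
vector plus lower order terms (for an order-preserving injection of the index sets). -/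
def OVI (R : Type u) [Ring R] : Type := ℕ

namespace OVI

variable {R : Type u} [Ring R]

/-- Build an object of `OVI R` from a natural number. -/
def mk (R : Type u) [Ring R] (n : ℕ) : OVI R := n

/-- The rank of an object of `OVI R`. -/
def len (n : OVI R) : ℕ := n

instance : Category (OVI R) where
  Hom n m := { φ : (Fin n.len → R) →ₗ[R] (Fin m.len → R) // IsOVIHom φ }
  id n := ⟨LinearMap.id, isOVIHom_id n.len⟩
  comp φ ψ := ⟨ψ.1 ∘ₗ φ.1, isOVIHom_comp φ.2 ψ.2⟩
  id_comp _ := Subtype.ext (LinearMap.comp_id _)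
  comp_id _ := Subtype.ext (LinearMap.id_comp _)
  assoc _ _ _ := Subtype.ext (LinearMap.comp_assoc _ _ _).symm

/-- The linear map underlying a morphism of `OVI R`. -/
def toLinear {n m : OVI R} (φ : n ⟶ m) : (Fin n.len → R) →ₗ[R] (Fin m.len → R) :=
  (φ : { φ : (Fin n.len → R) →ₗ[R] (Fin m.len → R) // IsOVIHom φ }).1

end OVI

/-- The category of `OVI(R)`-modules over `k` is locally noetherian: every submodule of
a finitely generated `OVI(R)`-module is finitely generated. -/
def OVIModulesLocallyNoetherian (R : Type u) [Ring R] (k : Type u) [CommRing k] : Prop :=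
  ∀ (M N : OVI R ⥤ ModuleCat.{u} k) (ι : N ⟶ M), CategoryTheory.Mono ι →
    CatModule.FG M → CatModule.FG N


namespace CatModule.FG

variable {C D : Type*} [Category C] [Category D] {k : Type u} [CommRing k] (F : C ⥤ D)

theorem comp_of_full [F.Full] [F.EssSurj] {M : D ⥤ ModuleCat.{u} k} (hM : FG M) :
    FG (F ⋙ M) := by
  obtain ⟨r, x, m, hspan⟩ := hM
  let e i := F.objObjPreimageIso (x i)
  refine ⟨r, fun i => F.objPreimage (x i), fun i => M.map (e i).inv (m i), fun y => ?_⟩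
  rw [eq_top_iff, ← hspan (F.obj y)]
  refine Submodule.span_mono ?_
  rintro _ ⟨i, g, rfl⟩
  refine ⟨i, F.preimage ((e i).hom ≫ g), ?_⟩
  rw [Functor.comp_map, F.map_preimage, M.map_comp]
  exact congrArg (M.map g) ((M.mapIso (e i)).inv_hom_id_apply (m i))

theorem of_comp [F.EssSurj] {N : D ⥤ ModuleCat.{u} k} (hN : FG (F ⋙ N)) : FG N := by
  obtain ⟨r, x, m, hspan⟩ := hN
  refine ⟨r, fun i => F.obj (x i), m, fun y => ?_⟩
  let e := F.objObjPreimageIso y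
  have hmap : (Submodule.span k {v | ∃ (i : Fin r) (φ : x i ⟶ F.objPreimage y),
      (F ⋙ N).map φ (m i) = v}).map (N.map e.hom).hom ≤ Submodule.span k
      {v | ∃ (i : Fin r) (g : F.obj (x i) ⟶ y), N.map g (m i) = v} := by
    rw [Submodule.map_span]
    refine Submodule.span_mono ?_
    rintro _ ⟨_, ⟨i, φ, rfl⟩, rfl⟩
    exact ⟨i, F.map φ ≫ e.hom, by simp⟩
  rw [eq_top_iff]
  intro v _
  exact hmap ⟨N.map e.inv v, by rw [hspan]; trivial, (N.mapIso e).inv_hom_id_apply v⟩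

end CatModule.FG

theorem Matrix.toLinearMapRight'_apply_single {R ι κ : Type*} [Semiring R] [Fintype ι]
    [DecidableEq ι] (A : Matrix ι κ R) (i : ι) (j : κ) :
    A.toLinearMapRight' (Pi.single i 1) j = A i j := by
  simp

namespace OVI

variable {S R : Type u} [Ring S] [Ring R] {n m p : ℕ}

variable (f : S →+* R)

def mapLinear (φ : (Fin n → S) →ₗ[S] (Fin m → S)) : (Fin n → R) →ₗ[R] (Fin m → R) :=
  ((LinearMap.toMatrixRight' φ).map f).toLinearMapRight'

theorem mapLinear_apply_single (φ : (Fin n → S) →ₗ[S] (Fin m → S)) (i : Fin n) (s : Fin m) :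
    mapLinear f φ (Pi.single i 1) s = f (φ (Pi.single i 1) s) :=
  Matrix.toLinearMapRight'_apply_single _ i s

theorem isOVIHom_mapLinear {φ : (Fin n → S) →ₗ[S] (Fin m → S)} (hφ : IsOVIHom φ) :
    IsOVIHom (mapLinear f φ) := by
  obtain ⟨e, he⟩ := hφ
  refine ⟨e, fun i => ⟨?_, fun r hr => ?_⟩⟩
  · rw [mapLinear_apply_single, (he i).1, map_one]
  · rw [mapLinear_apply_single, (he i).2 r hr, map_zero]

theorem mapLinear_id :
    mapLinear f (LinearMap.id : (Fin n → S) →ₗ[S] (Fin n → S)) = LinearMap.id := by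
  simp [mapLinear]

theorem mapLinear_comp (φ : (Fin n → S) →ₗ[S] (Fin m → S))
    (ψ : (Fin m → S) →ₗ[S] (Fin p → S)) :
    mapLinear f (ψ ∘ₗ φ) = mapLinear f ψ ∘ₗ mapLinear f φ := by
  simp [mapLinear, LinearMap.toMatrixRight'_comp, Matrix.map_mul, Matrix.toLinearMapRight'_mul]

def extendScalars : OVI S ⥤ OVI R where
  obj n := OVI.mk R n.len
  map φ := ⟨mapLinear f φ.1, isOVIHom_mapLinear f φ.2⟩
  map_id _ := Subtype.ext (mapLinear_id f)
  map_comp φ ψ := Subtype.ext (mapLinear_comp f φ.1 ψ.1)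

instance : (extendScalars f).EssSurj :=
  ⟨fun n => ⟨OVI.mk S n.len, ⟨Iso.refl _⟩⟩⟩

/-- Entries of `g` are lifted arbitrarily along `f`, except those that the `OVI` condition
pins to `1` or `0`, which are lifted to `1` or `0`. -/
theorem exists_isOVIHom_mapLinear_eq (hf : Function.Surjective f)
    {g : (Fin n → R) →ₗ[R] (Fin m → R)} (hg : IsOVIHom g) :
    ∃ φ : (Fin n → S) →ₗ[S] (Fin m → S), IsOVIHom φ ∧ mapLinear f φ = g := by
  classical
  obtain ⟨e, he⟩ := hg
  let A : Matrix (Fin n) (Fin m) S := Matrix.of fun i s =>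
    if s = e i then 1 else if e i < s then 0 else Function.surjInv hf (g (Pi.single i 1) s)
  have hA : A.map f = LinearMap.toMatrixRight' g := by
    ext i s
    change f (A i s) = g (Pi.single i 1) s
    by_cases h₁ : s = e i
    · simp [A, h₁, (he i).1]
    by_cases h₂ : e i < s
    · simp [A, h₁, h₂, (he i).2 s h₂]
    simp [A, h₁, h₂, Function.surjInv_eq hf]
  refine ⟨A.toLinearMapRight', ⟨e, fun i => ⟨?_, fun r hr => ?_⟩⟩, ?_⟩
  · simp [A]
  · simp [A, hr, hr.ne']
  · simp [mapLinear, hA]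

theorem extendScalars_full (hf : Function.Surjective f) : (extendScalars f).Full :=
  ⟨fun g => by
    obtain ⟨φ, hφ, hφg⟩ := exists_isOVIHom_mapLinear_eq f hf g.2
    exact ⟨⟨φ, hφ⟩, Subtype.ext hφg⟩⟩

end OVI

/-- Let `S` be a ring and `k` a commutative ring such that the category of
`OVI(S)`-modules over `k` is locally noetherian.  If `S` surjects onto a ring `R`, then
the category of `OVI(R)`-modules over `k` is locally noetherian. -/
theorem ovi_locally_noetherian_of_surjective (S R : Type u) [Ring S] [Ring R]
    (k : Type u) [CommRing k] (hS : OVIModulesLocallyNoetherian S k)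
    (f : S →+* R) (hf : Function.Surjective f) :
    OVIModulesLocallyNoetherian R k := by
  intro M N ι hι hM
  have := OVI.extendScalars_full f hf
  have hι' : Mono (Functor.whiskerLeft (OVI.extendScalars f) ι) := by
    rw [NatTrans.mono_iff_mono_app] at hι ⊢
    exact fun x => hι _
  exact (hS _ _ _ hι' (hM.comp_of_full _)).of_comp _
end

section
/- Let R be a (not necessarily commutative, associative unital) ring whose underlying additive group is a finitely generated abelian group. Then there exists a ring S whose underlying additive group is a finitely generated free abelian group, together with a surjective ring homomorphism S → R. -/
universe u

set_option maxHeartbeats 1000000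
set_option synthInstance.maxHeartbeats 400000

variable (R : Type u) [Ring R]

/-- The pullback subalgebra of `End(ℤⁿ) × R` of pairs `(φ, r)` with `π ∘ φ = (r * ·) ∘ π`. -/
def Pullback (n : ℕ) (π : (Fin n → ℤ) →ₗ[ℤ] R) :
    Subalgebra ℤ (Module.End ℤ (Fin n → ℤ) × R) where
  carrier := {p | ∀ x : Fin n → ℤ, π (p.1 x) = p.2 * π x}
  mul_mem' := by
    intro p q hp hq x
    simp only [Prod.fst_mul, Prod.snd_mul, Module.End.mul_apply]
    rw [hp, hq, mul_assoc]
  one_mem' := by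
    intro x
    simp only [Prod.fst_one, Prod.snd_one, Module.End.one_apply, one_mul]
  add_mem' := by
    intro p q hp hq x
    simp only [Prod.fst_add, Prod.snd_add, LinearMap.add_apply, map_add]
    rw [hp, hq, add_mul]
  algebraMap_mem' := by
    intro k x
    show π ((k : Module.End ℤ (Fin n → ℤ)) x) = (k : R) * π x
    rw [Module.End.intCast_apply, map_zsmul, zsmul_eq_mul]

/-- Let `R` be a (not necessarily commutative) ring whose underlying additive group is
finitely generated.  Then there is a ring `S` whose underlying additive group is a finitely
generated free abelian group, together with a surjective ring homomorphism `S → R`. -/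
theorem exists_surjective_ringHom_of_addGroup_fg (R : Type u) [Ring R]
    (hR : AddGroup.FG R) :
    ∃ S : RingCat.{u}, Module.Free ℤ S ∧ Module.Finite ℤ S ∧
      ∃ f : S →+* R, Function.Surjective f := by
  have hfin : Module.Finite ℤ R := Module.Finite.iff_addGroup_fg.mpr hR
  obtain ⟨n, π, hπ⟩ := Module.Finite.exists_fin' ℤ R
  set S := Pullback R n π with hS
  -- torsion-free
  have htf : NoZeroSMulDivisors ℤ S := by
    constructor
    intro k s hks
    by_cases hk : k = 0
    · exact Or.inl hk
    · right
      have h1 : k • (s : Module.End ℤ (Fin n → ℤ) × R) = 0 := by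
        have := Subtype.ext_iff.mp hks
        simpa using this
      have hE1 : (s : Module.End ℤ (Fin n → ℤ) × R).1 = 0 := by
        have h2 : k • (s : Module.End ℤ (Fin n → ℤ) × R).1 = 0 := by
          rw [← Prod.smul_fst, h1]; rfl
        refine LinearMap.ext fun x => ?_
        have hx : k • ((s : Module.End ℤ (Fin n → ℤ) × R).1 x) = 0 := by
          rw [← LinearMap.smul_apply, h2]; rfl
        have := smul_eq_zero.mp hx
        simpa [hk] using this
      have hmem : ∀ x : Fin n → ℤ,
          π ((s : Module.End ℤ (Fin n → ℤ) × R).1 x)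
            = (s : Module.End ℤ (Fin n → ℤ) × R).2 * π x := s.2
      have hR2 : (s : Module.End ℤ (Fin n → ℤ) × R).2 = 0 := by
        obtain ⟨x, hx⟩ := hπ 1
        have h3 := hmem x
        rw [hE1, hx, mul_one] at h3
        simpa using h3.symm
      exact Subtype.ext (Prod.ext hE1 hR2)
  -- finiteness
  have hfinS : Module.Finite ℤ S := by
    have : IsNoetherian ℤ (Module.End ℤ (Fin n → ℤ) × R) :=
      isNoetherian_of_isNoetherianRing_of_finite ℤ _
    have hfg : (Subalgebra.toSubmodule S).FG := IsNoetherian.noetherian _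
    exact Module.Finite.iff_fg.mpr hfg
  have hfree : Module.Free ℤ S := Module.free_of_finite_type_torsion_free'
  refine ⟨RingCat.of S, hfree, hfinS,
    (RingHom.snd (Module.End ℤ (Fin n → ℤ)) R).comp (S.val.toRingHom), ?_⟩
  intro r
  obtain ⟨φ, hφ⟩ := Module.projective_lifting_property π ((LinearMap.mulLeft ℤ r).comp π) hπ
  refine ⟨⟨(φ, r), fun x => ?_⟩, rfl⟩
  have := LinearMap.congr_fun hφ x
  simpa [LinearMap.mulLeft_apply] using this
end
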